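/- Let P* be a set of primes possibly together with the symbol ∞ such that, for every p ∈ P*, one has E[|log|a₁|_p|] < ∞, E[log⁺|b₁|_p] < ∞ and φ_p = E[log|a₁|_p] < 0, and let Z_∞^p ∈ ℚ_p denote the corresponding almost sure limit of Σ_{k=1}^n a₁⋯a_{k−1} b_k for each p ∈ P*. Then almost surely, for every point z = (z_p)_{p∈P*} of the topological product ∏_{p∈P*} ℚ_p, the orbit (A_n z_p + B_n)_{p∈P*} converges to (Z_∞^p)_{p∈P*} in the product topology as n → ∞. -/

import Mathlib

/-!
By the strong law of large numbers, `log ‖A_n‖_p ≤ ∑_{k<n} log |a_k|_p ~ n φ_p → -∞`, so almost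
surely `A_n → 0` at every place; as there are countably many places this holds at all of them
simultaneously. Then `A_n z_p + B_n → Z_∞^p` at every place, for every `z`, which is
convergence in the product topology.
-/

open MeasureTheory ProbabilityTheory Filter Topology

theorem ae_tendsto_sum_atBot_of_integral_neg {Ω : Type*} [MeasureSpace Ω]
    [IsProbabilityMeasure (ℙ : Measure Ω)] (X : ℕ → Ω → ℝ) (hint : Integrable (X 0) ℙ)
    (hindep : Pairwise (Function.onFun (fun f g => IndepFun f g ℙ) X))
    (hident : ∀ i, IdentDistrib (X i) (X 0) ℙ ℙ) (hneg : ∫ ω, X 0 ω ∂ℙ < 0) :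
    ∀ᵐ ω ∂ℙ, Tendsto (fun n => ∑ k ∈ Finset.range n, X k ω) atTop atBot := by
  filter_upwards [strong_law_ae_real X hint hindep hident] with ω hω
  have hmean : Tendsto (fun n : ℕ => (n : ℝ) * ((∑ k ∈ Finset.range n, X k ω) / n))
      atTop atBot :=
    tendsto_natCast_atTop_atTop.atTop_mul_neg hneg hω
  refine hmean.congr' ?_
  filter_upwards [eventually_ne_atTop 0] with n hn
  field_simp

theorem tendsto_prod_nhds_zero_of_tendsto_sum_log_norm_atBot {R : Type*} [NormedCommRing R]
    [NormOneClass R] {x : ℕ → R}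
    (hx : Tendsto (fun n => ∑ k ∈ Finset.range n, Real.log ‖x k‖) atTop atBot) :
    Tendsto (fun n => ∏ k ∈ Finset.range n, x k) atTop (𝓝 0) := by
  rw [tendsto_zero_iff_norm_tendsto_zero]
  refine squeeze_zero (fun _ => norm_nonneg _) (fun n => ?_) (Real.tendsto_exp_atBot.comp hx)
  calc ‖∏ k ∈ Finset.range n, x k‖
      ≤ ∏ k ∈ Finset.range n, ‖x k‖ := Finset.norm_prod_le _ _
    _ ≤ ∏ k ∈ Finset.range n, Real.exp (Real.log ‖x k‖) :=
        Finset.prod_le_prod (fun _ _ => norm_nonneg _) fun _ _ => Real.le_exp_log _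
    _ = Real.exp (∑ k ∈ Finset.range n, Real.log ‖x k‖) := (Real.exp_sum _ _).symm

theorem ae_tendsto_prod_nhds_zero_of_integral_log_norm_neg {Ω E R : Type*} [MeasureSpace Ω]
    [IsProbabilityMeasure (ℙ : Measure Ω)] [MeasurableSpace E] [NormedCommRing R]
    [NormOneClass R] (ξ : ℕ → Ω → E) (hindep : iIndepFun ξ ℙ)
    (hident : ∀ n, IdentDistrib (ξ n) (ξ 0) ℙ ℙ) (f : E → R)
    (hf : Measurable fun x => Real.log ‖f x‖)
    (hint : Integrable (fun ω => Real.log ‖f (ξ 0 ω)‖) ℙ)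
    (hdrift : ∫ ω, Real.log ‖f (ξ 0 ω)‖ ∂ℙ < 0) :
    ∀ᵐ ω ∂ℙ, Tendsto (fun n => ∏ k ∈ Finset.range n, f (ξ k ω)) atTop (𝓝 0) := by
  have hsum := ae_tendsto_sum_atBot_of_integral_neg (fun n ω => Real.log ‖f (ξ n ω)‖) hint
    (fun _ _ hmn => (hindep.indepFun hmn).comp hf hf) (fun n => (hident n).comp hf) hdrift
  filter_upwards [hsum] with ω hω
  exact tendsto_prod_nhds_zero_of_tendsto_sum_log_norm_atBot hω

theorem statement6_general
    {Ω : Type*} [MeasureSpace Ω] [IsProbabilityMeasure (ℙ : Measure Ω)]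
    (a b : ℕ → Ω → ℚ)
    (hindep : iIndepFun (fun n ω => (a n ω, b n ω)) ℙ)
    (hident : ∀ n, IdentDistrib (fun ω => (a n ω, b n ω)) (fun ω => (a 0 ω, b 0 ω)) ℙ ℙ)
    {P : Type*} [Countable P]
    {K : P → Type*} [∀ i, NormedField (K i)]
    (ι : ∀ i, ℚ →+* K i)
    (hInta : ∀ i, Integrable (fun ω => Real.log ‖ι i (a 0 ω)‖) ℙ)
    (hdrift : ∀ i, ∫ ω, Real.log ‖ι i (a 0 ω)‖ ∂ℙ < 0)
    (Z : ∀ i, Ω → K i)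
    (hZ : ∀ i, ∀ᵐ ω ∂ℙ,
      Tendsto (fun n => ι i (∑ k ∈ Finset.range n, (∏ j ∈ Finset.range k, a j ω) * b k ω))
        atTop (𝓝 (Z i ω))) :
    ∀ᵐ ω ∂ℙ, ∀ z : (i : P) → K i,
      Tendsto (fun n => fun i =>
          ι i (∏ k ∈ Finset.range n, a k ω) * z i
            + ι i (∑ k ∈ Finset.range n, (∏ j ∈ Finset.range k, a j ω) * b k ω))
        atTop (𝓝 (fun i => Z i ω)) := by
  have hA : ∀ i, ∀ᵐ ω ∂ℙ, Tendsto (fun n => ι i (∏ k ∈ Finset.range n, a k ω)) atTop (𝓝 0) :=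
    fun i => by
      simpa only [map_prod] using ae_tendsto_prod_nhds_zero_of_integral_log_norm_neg
        _ hindep hident (fun x => ι i x.1) (measurable_of_countable _) (hInta i) (hdrift i)
  rw [← ae_all_iff] at hA hZ
  filter_upwards [hA, hZ] with ω hAω hZω z
  refine tendsto_pi_nhds.2 fun i => ?_
  simpa using ((hAω i).mul_const (z i)).add (hZω i)

/-- Let `P*` be a (countable) family of places of `ℚ` — each realized
by a complete normed field `K i` with a dense embedding `ι i : ℚ →+* K i` whose norm
restricts on `ℚ` to the usual absolute value (`p = ∞`) or to a `p`-adic one — such that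
for each `i` one has `E[|log |a₁|_p|] < ∞`, `E[log⁺ |b₁|_p] < ∞` and
`φ_p = E[log |a₁|_p] < 0`, and let `Z i ∈ K i` be the corresponding a.s. limit of
`B_n = Σ_{k=1}^n a₁⋯a_{k-1} b_k`.  Then almost surely, for every point
`z = (z_p)_{p∈P*}` of the product `∏_{p∈P*} ℚ_p`, the orbit `(A_n z_p + B_n)_p`
converges to `(Z_∞^p)_p` in the product topology. -/
theorem statement6
    {Ω : Type*} [MeasureSpace Ω] [IsProbabilityMeasure (ℙ : Measure Ω)]
    (a b : ℕ → Ω → ℚ)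
    (hmeas : ∀ n, Measurable fun ω => (a n ω, b n ω))
    (hindep : iIndepFun (fun n ω => (a n ω, b n ω)) ℙ)
    (hident : ∀ n, IdentDistrib (fun ω => (a n ω, b n ω)) (fun ω => (a 0 ω, b 0 ω)) ℙ ℙ)
    (hne : ∀ n ω, a n ω ≠ 0)
    {P : Type*} [Countable P]
    {K : P → Type*} [∀ i, NormedField (K i)] [∀ i, CompleteSpace (K i)]
    (ι : ∀ i, ℚ →+* K i) (hdense : ∀ i, DenseRange (ι i))
    (hplace : ∀ i, (∀ q : ℚ, ‖ι i q‖ = |(q : ℝ)|) ∨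
      ∃ p : ℕ, p.Prime ∧ ∀ q : ℚ, ‖ι i q‖ = (padicNorm p q : ℝ))
    (hInta : ∀ i, Integrable (fun ω => Real.log ‖ι i (a 0 ω)‖) ℙ)
    (hIntb : ∀ i, Integrable (fun ω => max (Real.log ‖ι i (b 0 ω)‖) 0) ℙ)
    (hdrift : ∀ i, ∫ ω, Real.log ‖ι i (a 0 ω)‖ ∂ℙ < 0)
    (Z : ∀ i, Ω → K i)
    (hZ : ∀ i, ∀ᵐ ω ∂ℙ,
      Tendsto (fun n => ι i (∑ k ∈ Finset.range n, (∏ j ∈ Finset.range k, a j ω) * b k ω))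
        atTop (𝓝 (Z i ω))) :
    ∀ᵐ ω ∂ℙ, ∀ z : (i : P) → K i,
      Tendsto (fun n => fun i =>
          ι i (∏ k ∈ Finset.range n, a k ω) * z i
            + ι i (∑ k ∈ Finset.range n, (∏ j ∈ Finset.range k, a j ω) * b k ω))
        atTop (𝓝 (fun i => Z i ω)) :=
  statement6_general a b hindep hident ι hInta hdrift Z hZ
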